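/- Suppose for every pair of cities d_{ij} ≥ 0, every x feasible for MILP2 with binary assignment variables and nonnegative flows Y achieving the constraints gives objective value equal to the true FHSAP routing cost when flows are chosen canonically; consequently, the optimal value of MILP2 is a lower bound on the optimal value of FHSAP-QP: min MILP2 ≤ min FHSAP-QP. -/

import Mathlib

/-!
Route every city's demand through its own hub: the flow `Y^i_{st} = x_{is} Σ_j d_{ij} x_{jt}`
satisfies the conservation constraints of MILP2 because each row of `x` sums to one, and its
hub cost is the quadratic term of FHSAP-QP because `c_{ss} = 0` removes the diagonal. So every
FHSAP-QP value is a MILP2 value. MILP2 values are nonnegative, and both value sets are empty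
exactly when there is no assignment, in which case both infima are the junk value `sInf ∅`.
-/

open Finset

section

variable (n k : ℕ) (d : Fin n → Fin n → ℝ) (c : Fin n → Fin k → ℝ)
  (ch : Fin k → Fin k → ℝ)

/-- FHSAP-QP objective. -/
def qpObj (x : Fin n → Fin k → ℝ) : ℝ :=
  ∑ i, ∑ j, d i j * ((∑ s, c i s * x i s) + (∑ t, c j t * x j t)
    + ∑ s, ∑ t, ch s t * x i s * x j t)

/-- MILP2 objective. -/
def milp2Obj (x : Fin n → Fin k → ℝ) (Y : Fin n → Fin k → Fin k → ℝ) : ℝ :=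
  (∑ i, ∑ s, c i s * ((∑ j, d i j) + (∑ j, d j i)) * x i s)
    + ∑ i, ∑ s, ∑ t ∈ univ.filter (· ≠ s), ch s t * Y i s t

/-- MILP2 feasibility (binary assignment, nonnegative flows, conservation). -/
def milp2Feas (x : Fin n → Fin k → ℝ) (Y : Fin n → Fin k → Fin k → ℝ) : Prop :=
  (∀ i s, x i s = 0 ∨ x i s = 1) ∧ (∀ i, ∑ s, x i s = 1) ∧
    (∀ i s t, 0 ≤ Y i s t) ∧
    (∀ i s, (∑ t ∈ univ.filter (· ≠ s), Y i s t)
        - (∑ t ∈ univ.filter (· ≠ s), Y i t s)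
      = (∑ j, d i j) * x i s - ∑ j, d i j * x j s)

end

lemma Finset.sum_filter_ne_eq_sub {α β : Type*} [Fintype α] [DecidableEq α] [AddCommGroup β]
    (a : α) (f : α → β) : ∑ b ∈ univ.filter (· ≠ a), f b = ∑ b, f b - f a := by
  rw [filter_ne', sum_erase_eq_sub (mem_univ a)]

lemma csInf_le_csInf_of_nonempty_imp {α : Type*} [ConditionallyCompleteLattice α]
    {A B : Set α} (hA : BddBelow A) (hBA : B ⊆ A) (hne : A.Nonempty → B.Nonempty) :
    sInf A ≤ sInf B := by
  rcases B.eq_empty_or_nonempty with rfl | hB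
  · rw [Set.not_nonempty_iff_eq_empty.mp (mt hne Set.not_nonempty_empty)]
  · exact csInf_le_csInf hA hB hBA

section

variable {n k : ℕ} {d : Fin n → Fin n → ℝ} {c : Fin n → Fin k → ℝ} {ch : Fin k → Fin k → ℝ}
  {x : Fin n → Fin k → ℝ}

/-- The demand of `i` destined for cities of hub `t`, carried on the hub edge `s → t`;
it vanishes unless `i` is assigned to `s`. -/
def canonicalFlow (d : Fin n → Fin n → ℝ) (x : Fin n → Fin k → ℝ) (i : Fin n) (s t : Fin k) :
    ℝ :=
  x i s * ∑ j, d i j * x j t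

lemma nonneg_of_binary (hbin : ∀ i s, x i s = 0 ∨ x i s = 1) (i : Fin n) (s : Fin k) :
    0 ≤ x i s := by
  rcases hbin i s with h | h <;> simp [h]

lemma canonicalFlow_nonneg (hd : ∀ i j, 0 ≤ d i j) (hbin : ∀ i s, x i s = 0 ∨ x i s = 1)
    (i : Fin n) (s t : Fin k) : 0 ≤ canonicalFlow d x i s t :=
  mul_nonneg (nonneg_of_binary hbin i s)
    (sum_nonneg fun j _ => mul_nonneg (hd i j) (nonneg_of_binary hbin j t))

lemma canonicalFlow_conservation (hrow : ∀ i, ∑ s, x i s = 1) (i : Fin n) (s : Fin k) :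
    (∑ t ∈ univ.filter (· ≠ s), canonicalFlow d x i s t)
        - (∑ t ∈ univ.filter (· ≠ s), canonicalFlow d x i t s)
      = (∑ j, d i j) * x i s - ∑ j, d i j * x j s := by
  have hout : ∑ t, canonicalFlow d x i s t = x i s * ∑ j, d i j := by
    simp only [canonicalFlow, ← mul_sum]
    rw [sum_comm]
    simp [← mul_sum, hrow]
  have hin : ∑ t, canonicalFlow d x i t s = ∑ j, d i j * x j s := by
    simp only [canonicalFlow, ← sum_mul, hrow, one_mul]
  rw [sum_filter_ne_eq_sub, sum_filter_ne_eq_sub, hout, hin]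
  ring

lemma milp2Feas_canonicalFlow (hd : ∀ i j, 0 ≤ d i j) (hbin : ∀ i s, x i s = 0 ∨ x i s = 1)
    (hrow : ∀ i, ∑ s, x i s = 1) : milp2Feas n k d x (canonicalFlow d x) :=
  ⟨hbin, hrow, canonicalFlow_nonneg hd hbin, canonicalFlow_conservation hrow⟩

-- The access cost of `i` is paid once for each unit of demand leaving or entering `i`.
lemma sum_mul_accessCost :
    ∑ i, ∑ j, d i j * ((∑ s, c i s * x i s) + ∑ t, c j t * x j t)
      = ∑ i, ∑ s, c i s * ((∑ j, d i j) + ∑ j, d j i) * x i s := by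
  simp only [mul_add, sum_add_distrib]
  rw [sum_comm (f := fun i j => d i j * ∑ t, c j t * x j t), ← sum_add_distrib]
  refine sum_congr rfl fun i _ => ?_
  rw [← sum_mul, ← sum_mul, ← add_mul, mul_sum]
  exact sum_congr rfl fun s _ => by ring

lemma sum_hubCost_canonicalFlow (hdiag : ∀ s, ch s s = 0) (i : Fin n) :
    ∑ s, ∑ t ∈ univ.filter (· ≠ s), ch s t * canonicalFlow d x i s t
      = ∑ j, d i j * ∑ s, ∑ t, ch s t * x i s * x j t := by
  calc _ = ∑ s, ∑ t, ∑ j, d i j * (ch s t * x i s * x j t) := by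
        simp only [sum_filter_ne_eq_sub, hdiag, zero_mul, sum_const_zero, sub_zero,
          canonicalFlow, mul_sum]
        exact sum_congr rfl fun s _ => sum_congr rfl fun t _ => sum_congr rfl fun j _ => by ring
    _ = _ := by rw [sum_comm_cycle]; simp only [mul_sum]

lemma milp2Obj_canonicalFlow (hdiag : ∀ s, ch s s = 0) :
    milp2Obj n k d c ch x (canonicalFlow d x) = qpObj n k d c ch x := by
  unfold milp2Obj qpObj
  rw [← sum_mul_accessCost]
  simp only [sum_hubCost_canonicalFlow hdiag, mul_add, sum_add_distrib]

lemma milp2Obj_nonneg (hd : ∀ i j, 0 ≤ d i j) (hc : ∀ i s, 0 ≤ c i s)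
    (hch : ∀ s t, 0 ≤ ch s t) {Y : Fin n → Fin k → Fin k → ℝ} (h : milp2Feas n k d x Y) :
    0 ≤ milp2Obj n k d c ch x Y := by
  obtain ⟨hbin, -, hY, -⟩ := h
  have hdemand (i : Fin n) : 0 ≤ (∑ j, d i j) + ∑ j, d j i :=
    add_nonneg (sum_nonneg fun j _ => hd i j) (sum_nonneg fun j _ => hd j i)
  exact add_nonneg
    (sum_nonneg fun i _ => sum_nonneg fun s _ =>
      mul_nonneg (mul_nonneg (hc i s) (hdemand i)) (nonneg_of_binary hbin i s))
    (sum_nonneg fun i _ => sum_nonneg fun s _ => sum_nonneg fun t _ =>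
      mul_nonneg (hch s t) (hY i s t))

end

theorem stmt14_general (n k : ℕ) (d : Fin n → Fin n → ℝ)
    (c : Fin n → Fin k → ℝ) (ch : Fin k → Fin k → ℝ)
    (hd : ∀ i j, 0 ≤ d i j) (hc : ∀ i s, 0 ≤ c i s)
    (hch : ∀ s t, 0 ≤ ch s t)
    (hdiag : ∀ s, ch s s = 0) :
    (∀ x : Fin n → Fin k → ℝ,
      (∀ i s, x i s = 0 ∨ x i s = 1) → (∀ i, ∑ s, x i s = 1) →
        milp2Feas n k d x (fun i s t => x i s * ∑ j, d i j * x j t)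
        ∧ milp2Obj n k d c ch x (fun i s t => x i s * ∑ j, d i j * x j t)
            = qpObj n k d c ch x)
    ∧ sInf {v : ℝ | ∃ x Y, milp2Feas n k d x Y ∧ v = milp2Obj n k d c ch x Y}
        ≤ sInf {v : ℝ | ∃ x : Fin n → Fin k → ℝ,
            (∀ i s, x i s = 0 ∨ x i s = 1) ∧ (∀ i, ∑ s, x i s = 1)
            ∧ v = qpObj n k d c ch x} := by
  have canonical : ∀ x : Fin n → Fin k → ℝ,
      (∀ i s, x i s = 0 ∨ x i s = 1) → (∀ i, ∑ s, x i s = 1) →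
        milp2Feas n k d x (canonicalFlow d x)
        ∧ milp2Obj n k d c ch x (canonicalFlow d x) = qpObj n k d c ch x :=
    fun x hbin hrow => ⟨milp2Feas_canonicalFlow hd hbin hrow, milp2Obj_canonicalFlow hdiag⟩
  refine ⟨canonical, csInf_le_csInf_of_nonempty_imp ?_ ?_ ?_⟩
  · exact ⟨0, by rintro v ⟨x, Y, h, rfl⟩; exact milp2Obj_nonneg hd hc hch h⟩
  · rintro v ⟨x, hbin, hrow, rfl⟩
    exact ⟨x, _, (canonical x hbin hrow).1, (canonical x hbin hrow).2.symm⟩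
  · rintro ⟨v, x, Y, ⟨hbin, hrow, -⟩, -⟩
    exact ⟨_, x, hbin, hrow, rfl⟩

/-- For every binary assignment `x`, the canonical flows are MILP2-feasible and
the MILP2 objective equals the FHSAP-QP objective; consequently
`min MILP2 ≤ min FHSAP-QP`. -/
theorem stmt14 (n k : ℕ) (hk : 0 < k) (d : Fin n → Fin n → ℝ)
    (c : Fin n → Fin k → ℝ) (ch : Fin k → Fin k → ℝ)
    (hd : ∀ i j, 0 ≤ d i j) (hc : ∀ i s, 0 ≤ c i s)
    (hch : ∀ s t, 0 ≤ ch s t) (hsym : ∀ s t, ch s t = ch t s)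
    (hdiag : ∀ s, ch s s = 0) :
    (∀ x : Fin n → Fin k → ℝ,
      (∀ i s, x i s = 0 ∨ x i s = 1) → (∀ i, ∑ s, x i s = 1) →
        milp2Feas n k d x (fun i s t => x i s * ∑ j, d i j * x j t)
        ∧ milp2Obj n k d c ch x (fun i s t => x i s * ∑ j, d i j * x j t)
            = qpObj n k d c ch x)
    ∧ sInf {v : ℝ | ∃ x Y, milp2Feas n k d x Y ∧ v = milp2Obj n k d c ch x Y}
        ≤ sInf {v : ℝ | ∃ x : Fin n → Fin k → ℝ,
            (∀ i s, x i s = 0 ∨ x i s = 1) ∧ (∀ i, ∑ s, x i s = 1)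
            ∧ v = qpObj n k d c ch x} :=
  stmt14_general n k d c ch hd hc hch hdiag
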